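/- Let T be the 2×2 matrix with real entries, with rows (a, b) and (c, d), acting on ℓ_p², and let Tᵗ denote its transpose, also acting on ℓ_p². Then V_p(Tᵗ) is the mirror image of V_p(T) with respect to the vertical line Re z = (a + d)/2; that is, V_p(Tᵗ) = { (a + d) − conj(z) : z ∈ V_p(T) }. -/

import Mathlib

open Complex Real

/-- The `ℓ_p` norm on `ℂ²`. -/
noncomputable def lpNorm (p : ℝ) (x : Fin 2 → ℂ) : ℝ :=
  (∑ k, ‖x k‖ ^ p) ^ (1 / p)

/-- The numerical range of a `2 × 2` complex matrix acting on `ℓ_p²`.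
Note that when `x k = 0` the corresponding term vanishes since `conj (x k) = 0`. -/
noncomputable def numRange (p : ℝ) (T : Matrix (Fin 2) (Fin 2) ℂ) : Set ℂ :=
  { z | ∃ x : Fin 2 → ℂ, lpNorm p x = 1 ∧
      z = ∑ k, T.mulVec x k * (starRingEnd ℂ) (x k) * ((‖x k‖ ^ (p - 2) : ℝ) : ℂ) }

/-- The numerical radius of a `2 × 2` complex matrix acting on `ℓ_p²`. -/
noncomputable def numRadius (p : ℝ) (T : Matrix (Fin 2) (Fin 2) ℂ) : ℝ :=
  sSup ((fun z : ℂ => ‖z‖) '' numRange p T)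

/-!
For `x ∈ ℂ²` put `x' = (-x̄₂, x̄₁)`. The map `x ↦ x'` preserves `‖·‖_p`, swaps the two moduli
`|x₁|, |x₂|`, and a direct expansion gives, for every complex `T`,
`V_p(Tᵗ; x') = tr T · ‖x‖_p^p - conj V_p(T̄; x)`, where `T̄` is the entrywise conjugate.
Hence `V_p(Tᵗ) = tr T - conj V_p(T̄)`, and for real `T` we have `T̄ = T`.
-/

open scoped Matrix

noncomputable def numRangeForm (p : ℝ) (T : Matrix (Fin 2) (Fin 2) ℂ) (x : Fin 2 → ℂ) : ℂ :=
  ∑ k, T.mulVec x k * (starRingEnd ℂ) (x k) * ((‖x k‖ ^ (p - 2) : ℝ) : ℂ)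

def rotateConj (x : Fin 2 → ℂ) : Fin 2 → ℂ :=
  ![-(starRingEnd ℂ) (x 1), (starRingEnd ℂ) (x 0)]

theorem mem_numRange_iff {p : ℝ} {T : Matrix (Fin 2) (Fin 2) ℂ} {z : ℂ} :
    z ∈ numRange p T ↔ ∃ x, lpNorm p x = 1 ∧ z = numRangeForm p T x :=
  Iff.rfl

theorem mul_conj_mul_norm_rpow_sub_two {p : ℝ} (hp : p ≠ 0) (z : ℂ) :
    z * (starRingEnd ℂ) z * ((‖z‖ ^ (p - 2) : ℝ) : ℂ) = ((‖z‖ ^ p : ℝ) : ℂ) := by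
  rw [Complex.mul_conj, Complex.normSq_eq_norm_sq]
  rcases eq_or_ne z 0 with rfl | hz
  · simp [Real.zero_rpow hp]
  · rw [← Complex.ofReal_mul, ← Real.rpow_natCast, ← Real.rpow_add (norm_pos_iff.mpr hz)]
    norm_num

theorem sum_norm_rpow_eq_one {p : ℝ} (hp : p ≠ 0) {x : Fin 2 → ℂ} (hx : lpNorm p x = 1) :
    ‖x 0‖ ^ p + ‖x 1‖ ^ p = 1 := by
  have hs : 0 ≤ ∑ k, ‖x k‖ ^ p := Finset.sum_nonneg fun k _ => by positivity
  have h := congrArg (· ^ p) hx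
  simp only [lpNorm] at h
  rw [← Real.rpow_mul hs, one_div, inv_mul_cancel₀ hp, Real.rpow_one, Real.one_rpow] at h
  simpa [Fin.sum_univ_two] using h

theorem lpNorm_rotateConj (p : ℝ) (x : Fin 2 → ℂ) : lpNorm p (rotateConj x) = lpNorm p x := by
  simp [lpNorm, rotateConj, Fin.sum_univ_two, add_comm]

theorem numRangeForm_transpose_rotateConj {p : ℝ} (hp : p ≠ 0)
    (T : Matrix (Fin 2) (Fin 2) ℂ) (x : Fin 2 → ℂ) :
    numRangeForm p Tᵀ (rotateConj x) =
      T.trace * ((‖x 0‖ ^ p + ‖x 1‖ ^ p : ℝ) : ℂ) -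
        (starRingEnd ℂ) (numRangeForm p (T.map (starRingEnd ℂ)) x) := by
  have h0 := mul_conj_mul_norm_rpow_sub_two hp (x 0)
  have h1 := mul_conj_mul_norm_rpow_sub_two hp (x 1)
  simp only [numRangeForm, rotateConj, Fin.sum_univ_two, Matrix.mulVec, dotProduct,
    Matrix.trace_fin_two, Matrix.transpose_apply, Matrix.map_apply, Matrix.cons_val_zero,
    Matrix.cons_val_one, map_add, map_mul, map_neg, Complex.conj_conj, Complex.conj_ofReal,
    norm_neg, Complex.norm_conj, Complex.ofReal_add]
  linear_combination (T 0 0 + T 1 1) * (h0 + h1)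

theorem numRange_transpose {p : ℝ} (hp : p ≠ 0) (T : Matrix (Fin 2) (Fin 2) ℂ) :
    numRange p Tᵀ =
      { w : ℂ | ∃ z ∈ numRange p (T.map (starRingEnd ℂ)), w = T.trace - (starRingEnd ℂ) z } := by
  ext w
  simp only [Set.mem_ofPred_eq, mem_numRange_iff]
  constructor
  · rintro ⟨y, hy, rfl⟩
    -- `T̄ᵗ` has transpose `T̄` and conjugate `Tᵗ`
    have key := numRangeForm_transpose_rotateConj hp (T.map (starRingEnd ℂ))ᵀ y
    refine ⟨_, ⟨rotateConj y, (lpNorm_rotateConj p y).trans hy, rfl⟩, ?_⟩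
    have hconj : (T.map (starRingEnd ℂ)).map (starRingEnd ℂ) = T := by ext; simp
    simp only [Matrix.transpose_transpose, Matrix.transpose_map, hconj] at key
    rw [key, sum_norm_rpow_eq_one hp hy]
    simp [Matrix.trace_fin_two]
  · rintro ⟨z, ⟨x, hx, rfl⟩, rfl⟩
    refine ⟨rotateConj x, (lpNorm_rotateConj p x).trans hx, ?_⟩
    rw [numRangeForm_transpose_rotateConj hp, sum_norm_rpow_eq_one hp hx, Complex.ofReal_one,
      mul_one]

theorem numRange_transpose_mirror (p : ℝ) (hp : 1 < p) (a b c d : ℝ) :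
    numRange p (!![(a : ℂ), (b : ℂ); (c : ℂ), (d : ℂ)]).transpose =
      { w : ℂ | ∃ z ∈ numRange p !![(a : ℂ), (b : ℂ); (c : ℂ), (d : ℂ)],
          w = ((a : ℂ) + (d : ℂ)) - (starRingEnd ℂ) z } := by
  have hreal : (!![(a : ℂ), (b : ℂ); (c : ℂ), (d : ℂ)]).map (starRingEnd ℂ) =
      !![(a : ℂ), (b : ℂ); (c : ℂ), (d : ℂ)] := by
    ext i j
    fin_cases i <;> fin_cases j <;> simp
  rw [numRange_transpose (by linarith), hreal, Matrix.trace_fin_two_of]
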